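/- Consider T independent Bernoulli(p) trials. The probability that there exists a run of at least v consecutive successes equals Σ_{l=1}^{⌊(T+1)/(v+1)⌋} (−1)^{l+1} [ p + ((T − l v + 1)/l)(1 − p) ] · C(T − l v, l − 1) · p^{l v} (1 − p)^{l−1}. -/

import Mathlib

/-
Let `P T` be the probability of a run of `v` successes in `T` trials. A run occurs within the
first `n + 1 + v` trials but not within the first `n + v` exactly when the last `v` trials
succeed, trial `n + 1` fails and the first `n` trials contain no run. By independence of disjoint
blocks of trials, `P (n + 1 + v) = P (n + v) + (1 - p) p ^ v (1 - P n)`, and together with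
`P T = 0` for `T < v` and `P v = p ^ v` this recurrence determines `P`. Writing the `l`-th summand
of de Moivre's formula as
`(-1) ^ (l + 1) p ^ (l v) (1 - p) ^ (l - 1) (p C(m, l - 1) + (1 - p) C(m + 1, l))`
with `m = T - l v`, Pascal's rule shows that the formula satisfies the same recurrence.
-/

open MeasureTheory
open scoped ENNReal

/-- The event that `g : Fin T → Bool` contains a run of at least `v` consecutive `true`s. -/
def hasRun (T v : ℕ) : Set (Fin T → Bool) :=
  {g | ∃ t : ℕ, t + v ≤ T ∧ ∀ s : Fin T, t ≤ (s : ℕ) → (s : ℕ) < t + v → g s = true}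

/-- The law of `T` independent Bernoulli(p) trials. -/
noncomputable def bernoulliSeq (T : ℕ) (p : ℝ≥0∞) (hp : p ≤ 1) :
    Measure (Fin T → Bool) :=
  Measure.pi fun _ => (PMF.ofFintype (fun b => cond b p (1 - p)) (by simp [hp])).toMeasure

theorem MeasureTheory.measurePreserving_fin_append {α : Type*} [MeasurableSpace α] (ν : Measure α)
    [SigmaFinite ν] (a b : ℕ) :
    MeasurePreserving (fun x : (Fin a → α) × (Fin b → α) => Fin.append x.1 x.2)
      ((Measure.pi fun _ => ν).prod (Measure.pi fun _ => ν)) (Measure.pi fun _ => ν) := by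
  have hmeas : Measurable fun x : (Fin a → α) × (Fin b → α) => Fin.append x.1 x.2 :=
    measurable_pi_lambda _ fun i => by
      induction i using Fin.addCases <;> simp only [Fin.append_left, Fin.append_right] <;> fun_prop
  refine ⟨hmeas, (Measure.pi_eq fun s hs => ?_).symm⟩
  have hpre : (fun x : (Fin a → α) × (Fin b → α) => Fin.append x.1 x.2) ⁻¹' Set.univ.pi s =
      Set.univ.pi (fun i => s (Fin.castAdd b i)) ×ˢ Set.univ.pi (fun j => s (Fin.natAdd a j)) := by
    ext x
    simp [Fin.forall_fin_add]
  rw [Measure.map_apply hmeas (MeasurableSet.univ_pi hs), hpre, Measure.prod_prod,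
    Measure.pi_pi, Measure.pi_pi, Fin.prod_univ_add]

theorem MeasureTheory.Measure.pi_apply_of_append_mem_iff {α : Type*} [MeasurableSpace α]
    (ν : Measure α) [SigmaFinite ν]
    {a b : ℕ} {S : Set (Fin (a + b) → α)} {A : Set (Fin a → α)} {B : Set (Fin b → α)}
    (hS : MeasurableSet S) (hSAB : ∀ h k, Fin.append h k ∈ S ↔ h ∈ A ∧ k ∈ B) :
    Measure.pi (fun _ => ν) S = Measure.pi (fun _ => ν) A * Measure.pi (fun _ => ν) B := by
  have hpre : (fun x : (Fin a → α) × (Fin b → α) => Fin.append x.1 x.2) ⁻¹' S = A ×ˢ B := by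
    ext x
    exact hSAB x.1 x.2
  rw [← (measurePreserving_fin_append ν a b).measure_preimage hS.nullMeasurableSet, hpre,
    Measure.prod_prod]

-- `hasRun T v` is `hasRunWithin T v T` by definition.
def hasRunWithin (T v B : ℕ) : Set (Fin T → Bool) :=
  {g | ∃ t : ℕ, t + v ≤ B ∧ ∀ s : Fin T, t ≤ (s : ℕ) → (s : ℕ) < t + v → g s = true}

lemma hasRunWithin_mono {T v B B' : ℕ} (h : B ≤ B') : hasRunWithin T v B ⊆ hasRunWithin T v B' :=
  fun _ ⟨t, ht, hrun⟩ => ⟨t, ht.trans h, hrun⟩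

lemma append_mem_hasRunWithin_iff {a b v B : ℕ} (hB : B ≤ a) (h : Fin a → Bool)
    (k : Fin b → Bool) : Fin.append h k ∈ hasRunWithin (a + b) v B ↔ h ∈ hasRunWithin a v B := by
  constructor
  · rintro ⟨t, ht, hrun⟩
    exact ⟨t, ht, fun i h₁ h₂ => by simpa using hrun (Fin.castAdd b i) h₁ h₂⟩
  · rintro ⟨t, ht, hrun⟩
    refine ⟨t, ht, Fin.addCases (fun i h₁ h₂ => ?_) (fun j h₁ h₂ => ?_)⟩
    · simpa using hrun i h₁ h₂
    · simp at h₂; omega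

lemma append_mem_hasRun_sdiff_iff {n v : ℕ} (h : Fin (n + 1) → Bool) (k : Fin v → Bool) :
    Fin.append h k ∈ hasRun (n + 1 + v) v \ hasRunWithin (n + 1 + v) v (n + v) ↔
      (h ∉ hasRunWithin (n + 1) v n ∧ h (Fin.last n) = false) ∧ k = fun _ => true := by
  constructor
  · rintro ⟨⟨t, ht, hrun⟩, hnot⟩
    obtain rfl : t = n + 1 := by
      by_contra hne
      exact hnot ⟨t, by omega, hrun⟩
    have hk : k = fun _ => true := funext fun j => by
      simpa using hrun (Fin.natAdd (n + 1) j) (by simp) (by simp)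
    refine ⟨⟨fun hh => hnot ?_, ?_⟩, hk⟩
    · exact hasRunWithin_mono (by omega) ((append_mem_hasRunWithin_iff (by omega) h k).2 hh)
    · by_contra hl
      refine hnot ⟨n, le_rfl, Fin.addCases (fun i h₁ h₂ => ?_) (fun j _ _ => by simp [hk])⟩
      obtain rfl : i = Fin.last n := Fin.ext (by simp at h₁ h₂ ⊢; omega)
      simpa using hl
  · rintro ⟨⟨hh, hl⟩, rfl⟩
    refine ⟨⟨n + 1, le_rfl, Fin.addCases (fun i h₁ _ => ?_) (fun j _ _ => by simp)⟩, ?_⟩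
    · rintro ⟨t, ht, hrun⟩
      by_cases htn : t + v ≤ n
      · exact hh ((append_mem_hasRunWithin_iff (by omega) h _).1 ⟨t, htn, hrun⟩)
      · have := hrun (Fin.castAdd v (Fin.last n)) (by simp; omega) (by simp; omega)
        simp [hl] at this
    · simp at h₁; omega

structure IsRunRecurrence (v : ℕ) (p : ℝ) (f : ℕ → ℝ) : Prop where
  eq_zero_of_lt : ∀ T < v, f T = 0
  self : f v = p ^ v
  add_one_add : ∀ n, f (n + 1 + v) = f (n + v) + (1 - p) * p ^ v * (1 - f n)

theorem IsRunRecurrence.unique {v : ℕ} {p : ℝ} {f g : ℕ → ℝ} (hf : IsRunRecurrence v p f)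
    (hg : IsRunRecurrence v p g) : f = g := by
  funext T
  induction T using Nat.strong_induction_on with
  | _ T ih =>
    rcases lt_trichotomy T v with hT | rfl | hT
    · rw [hf.eq_zero_of_lt T hT, hg.eq_zero_of_lt T hT]
    · rw [hf.self, hg.self]
    · obtain ⟨n, rfl⟩ : ∃ n, T = n + 1 + v := ⟨T - v - 1, by omega⟩
      rw [hf.add_one_add, hg.add_one_add, ih (n + v) (by omega), ih n (by omega)]

section Bernoulli

variable {q : ℝ≥0∞} {hq : q ≤ 1}

instance (T : ℕ) : IsProbabilityMeasure (bernoulliSeq T q hq) := by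
  unfold bernoulliSeq; infer_instance

lemma bernoulliSeq_real_const (T : ℕ) (b : Bool) :
    (bernoulliSeq T q hq).real {fun _ => b} = (cond b q (1 - q)).toReal ^ T := by
  simp [bernoulliSeq, measureReal_def, Measure.pi_singleton]

lemma bernoulliSeq_real_of_append_mem_iff {a b : ℕ} {S : Set (Fin (a + b) → Bool)}
    {A : Set (Fin a → Bool)} {B : Set (Fin b → Bool)}
    (hSAB : ∀ h k, Fin.append h k ∈ S ↔ h ∈ A ∧ k ∈ B) :
    (bernoulliSeq (a + b) q hq).real S =
      (bernoulliSeq a q hq).real A * (bernoulliSeq b q hq).real B := by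
  simp only [measureReal_def, bernoulliSeq]
  rw [Measure.pi_apply_of_append_mem_iff _ .of_discrete hSAB, ENNReal.toReal_mul]

lemma bernoulliSeq_real_hasRunWithin {T v B : ℕ} (hB : B ≤ T) :
    (bernoulliSeq T q hq).real (hasRunWithin T v B) = (bernoulliSeq B q hq).real (hasRun B v) := by
  induction T, hB using Nat.le_induction with
  | base => rfl
  | succ T hBT ih =>
    rw [bernoulliSeq_real_of_append_mem_iff (A := hasRunWithin T v B) (B := Set.univ)
      (fun h k => by simpa using append_mem_hasRunWithin_iff hBT h k), probReal_univ, mul_one, ih]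

lemma bernoulliSeq_real_hasRun_sdiff (n v : ℕ) :
    (bernoulliSeq (n + 1 + v) q hq).real (hasRun (n + 1 + v) v \ hasRunWithin (n + 1 + v) v (n + v))
      = (1 - (bernoulliSeq n q hq).real (hasRun n v)) * (1 - q).toReal * q.toReal ^ v := by
  have hlast (h : Fin n → Bool) (c : Fin 1 → Bool) :
      Fin.append h c ∈ {h' | h' ∉ hasRunWithin (n + 1) v n ∧ h' (Fin.last n) = false} ↔
        h ∈ (hasRun n v)ᶜ ∧ c ∈ ({fun _ => false} : Set (Fin 1 → Bool)) := by
    have hc : Fin.append h c (Fin.last n) = c 0 := Fin.append_right h c 0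
    simp only [Set.mem_ofPred_eq, append_mem_hasRunWithin_iff le_rfl, hc, Set.mem_compl_iff,
      Set.mem_singleton_iff, funext_iff, Fin.forall_fin_one]
    rfl
  rw [bernoulliSeq_real_of_append_mem_iff
      (A := {h | h ∉ hasRunWithin (n + 1) v n ∧ h (Fin.last n) = false}) (B := {fun _ => true})
      append_mem_hasRun_sdiff_iff,
    bernoulliSeq_real_of_append_mem_iff hlast, probReal_compl_eq_one_sub .of_discrete,
    bernoulliSeq_real_const, bernoulliSeq_real_const]
  simp

theorem isRunRecurrence_bernoulliSeq (q : ℝ≥0∞) (hq : q ≤ 1) (v : ℕ) :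
    IsRunRecurrence v q.toReal fun T => (bernoulliSeq T q hq).real (hasRun T v) where
  eq_zero_of_lt T hT := by
    have : hasRun T v = ∅ := Set.eq_empty_of_forall_notMem fun _ ⟨t, ht, _⟩ => by omega
    rw [this, measureReal_empty]
  self := by
    have : hasRun v v = {fun _ => true} := by
      ext g
      refine ⟨fun ⟨t, ht, hrun⟩ => funext fun s => hrun s (by omega) (by omega), ?_⟩
      rintro rfl
      exact ⟨0, (zero_add v).le, fun _ _ _ => rfl⟩
    rw [this, bernoulliSeq_real_const]
    rfl
  add_one_add n := by
    have hsub : hasRunWithin (n + 1 + v) v (n + v) ⊆ hasRun (n + 1 + v) v :=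
      hasRunWithin_mono (by omega)
    rw [← sub_eq_iff_eq_add',
      ← bernoulliSeq_real_hasRunWithin (T := n + 1 + v) (B := n + v) (by omega),
      ← measureReal_sdiff hsub .of_discrete, bernoulliSeq_real_hasRun_sdiff,
      ENNReal.toReal_sub_of_le hq ENNReal.one_ne_top, ENNReal.toReal_one]
    ring

end Bernoulli

section Formula

open Finset

noncomputable def pascalMix (p : ℝ) (m i : ℕ) : ℝ :=
  p * m.choose i + (1 - p) * (m + 1).choose (i + 1)

lemma pascalMix_add_one_sub (p : ℝ) (m i : ℕ) :
    pascalMix p (m + 1) (i + 1) - pascalMix p m (i + 1) = pascalMix p m i := by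
  simp only [pascalMix, Nat.choose_succ_succ' (m + 1) (i + 1), Nat.choose_succ_succ' m i]
  push_cast
  ring

lemma pascalMix_eq_zero_of_lt (p : ℝ) {m i : ℕ} (h : m < i) : pascalMix p m i = 0 := by
  simp [pascalMix, Nat.choose_eq_zero_of_lt h, Nat.choose_eq_zero_of_lt (Nat.succ_lt_succ h)]

-- `runTerm p v T (l - 1)` is the `l`-th summand of de Moivre's formula.
noncomputable def runTerm (p : ℝ) (v T i : ℕ) : ℝ :=
  (-1) ^ i * p ^ ((i + 1) * v) * (1 - p) ^ i * pascalMix p (T - (i + 1) * v) i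

noncomputable def runSum (p : ℝ) (v T : ℕ) : ℝ :=
  ∑ i ∈ range ((T + 1) / (v + 1)), runTerm p v T i

lemma runSum_eq_sum_range (p : ℝ) {v T M : ℕ} (hvT : v ≤ T) (hM : (T + 1) / (v + 1) ≤ M) :
    runSum p v T = ∑ i ∈ range M, runTerm p v T i := by
  refine sum_subset (range_subset_range.2 hM) fun i _ hi => ?_
  rw [mem_range, not_lt] at hi
  have hlt : T + 1 < (i + 1) * (v + 1) := Nat.lt_mul_of_div_lt (by omega) (by omega)
  have hpos : 1 ≤ (T + 1) / (v + 1) := Nat.one_le_div_iff (by omega) |>.2 (by omega)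
  rw [mul_add_one] at hlt
  rw [runTerm, pascalMix_eq_zero_of_lt p (by omega), mul_zero]

lemma runTerm_add_one_sub {p : ℝ} {v n i : ℕ} (h : (i + 1) * v ≤ n) :
    runTerm p v (n + 1 + v) (i + 1) - runTerm p v (n + v) (i + 1) =
      -((1 - p) * p ^ v * runTerm p v n i) := by
  have hv : (i + 1 + 1) * v = (i + 1) * v + v := by ring
  rw [runTerm, runTerm, runTerm, hv,
    show n + 1 + v - ((i + 1) * v + v) = n - (i + 1) * v + 1 by omega,
    show n + v - ((i + 1) * v + v) = n - (i + 1) * v by omega]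
  linear_combination (-1) ^ (i + 1) * p ^ ((i + 1) * v + v) * (1 - p) ^ (i + 1) *
    pascalMix_add_one_sub p (n - (i + 1) * v) i

lemma runSum_add_one_add (p : ℝ) (v n : ℕ) :
    runSum p v (n + 1 + v) = runSum p v (n + v) + (1 - p) * p ^ v * (1 - runSum p v n) := by
  set M := (n + 1) / (v + 1)
  have htop : (n + 1 + v + 1) / (v + 1) = M + 1 := by
    rw [show n + 1 + v + 1 = n + 1 + (v + 1) by ring, Nat.add_div_right _ (by omega)]
  have hlong : runSum p v (n + 1 + v) = ∑ i ∈ range (M + 1), runTerm p v (n + 1 + v) i := by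
    rw [runSum, htop]
  have hshort : runSum p v (n + v) = ∑ i ∈ range (M + 1), runTerm p v (n + v) i :=
    runSum_eq_sum_range p (by omega) (htop ▸ Nat.div_le_div_right (by omega))
  have hfirst : runTerm p v (n + 1 + v) 0 - runTerm p v (n + v) 0 = (1 - p) * p ^ v := by
    simp only [runTerm, pascalMix, zero_add, one_mul, show n + 1 + v - v = n + 1 by omega,
      show n + v - v = n by omega, pow_zero, Nat.choose_zero_right, Nat.choose_one_right]
    push_cast
    ring
  have hrest : ∑ i ∈ range M, (runTerm p v (n + 1 + v) (i + 1) - runTerm p v (n + v) (i + 1)) =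
      -((1 - p) * p ^ v * runSum p v n) := by
    rw [runSum, mul_sum, ← sum_neg_distrib]
    refine sum_congr rfl fun i hi => runTerm_add_one_sub ?_
    have := Nat.le_div_iff_mul_le (by omega) |>.1 (mem_range.1 hi)
    nlinarith
  rw [sum_sub_distrib] at hrest
  rw [hlong, hshort, sum_range_succ', sum_range_succ']
  linear_combination hrest + hfirst

theorem isRunRecurrence_runSum (p : ℝ) (v : ℕ) : IsRunRecurrence v p (runSum p v) where
  eq_zero_of_lt T hT := by rw [runSum, Nat.div_eq_of_lt (by omega), sum_range_zero]
  self := by simp [runSum, runTerm, pascalMix]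
  add_one_add := runSum_add_one_add p v

lemma deMoivre_sum_eq_runSum (p : ℝ) (v T : ℕ) :
    ∑ l ∈ Icc 1 ((T + 1) / (v + 1)),
        (-1 : ℝ) ^ (l + 1) *
          (p + (((T - l * v + 1 : ℕ) : ℝ) / l) * (1 - p)) *
          ((T - l * v).choose (l - 1) : ℝ) * p ^ (l * v) * (1 - p) ^ (l - 1) =
      runSum p v T := by
  rw [runSum, ← Ico_add_one_right_eq_Icc, sum_Ico_eq_sum_range, Nat.add_sub_cancel]
  refine sum_congr rfl fun i _ => ?_
  have hchoose : ((T - (i + 1) * v : ℕ) + 1 : ℝ) * (T - (i + 1) * v).choose i =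
      (T - (i + 1) * v + 1).choose (i + 1) * (i + 1) := by
    exact_mod_cast Nat.add_one_mul_choose_eq (T - (i + 1) * v) i
  rw [runTerm, pascalMix, add_comm 1 i, Nat.add_sub_cancel]
  field_simp
  push_cast
  linear_combination (-1) ^ i * p ^ ((i + 1) * v) * (1 - p) ^ i * (1 - p) * hchoose

end Formula

theorem stmt_6_general (T v : ℕ) (p : ℝ) (hp0 : 0 ≤ p) (hp1 : p ≤ 1) :
    (bernoulliSeq T (ENNReal.ofReal p) (ENNReal.ofReal_le_one.mpr hp1) (hasRun T v)).toReal =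
      ∑ l ∈ Finset.Icc 1 ((T + 1) / (v + 1)),
        (-1 : ℝ) ^ (l + 1) *
          (p + (((T - l * v + 1 : ℕ) : ℝ) / l) * (1 - p)) *
          ((T - l * v).choose (l - 1) : ℝ) * p ^ (l * v) * (1 - p) ^ (l - 1) := by
  have hrec := isRunRecurrence_bernoulliSeq (ENNReal.ofReal p) (ENNReal.ofReal_le_one.mpr hp1) v
  rw [ENNReal.toReal_ofReal hp0] at hrec
  rw [deMoivre_sum_eq_runSum, ← hrec.unique (isRunRecurrence_runSum p v)]
  rfl

/-- de Moivre: for `T` independent Bernoulli(p) trials, the probability of a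
run of at least `v` consecutive successes equals
`Σ_{l=1}^{⌊(T+1)/(v+1)⌋} (−1)^{l+1} [p + ((T−lv+1)/l)(1−p)] C(T−lv, l−1) p^{lv} (1−p)^{l−1}`. -/
theorem stmt_6 (T v : ℕ) (hv : 1 ≤ v) (p : ℝ) (hp0 : 0 ≤ p) (hp1 : p ≤ 1) :
    (bernoulliSeq T (ENNReal.ofReal p) (ENNReal.ofReal_le_one.mpr hp1) (hasRun T v)).toReal =
      ∑ l ∈ Finset.Icc 1 ((T + 1) / (v + 1)),
        (-1 : ℝ) ^ (l + 1) *
          (p + (((T - l * v + 1 : ℕ) : ℝ) / l) * (1 - p)) *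
          ((T - l * v).choose (l - 1) : ℝ) * p ^ (l * v) * (1 - p) ^ (l - 1) :=
  stmt_6_general T v p hp0 hp1
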